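/- arXiv:2010.14338 — 2 statements merged into one kernel-verified Lean document; each statement's English description precedes it below -/
import Mathlib

section
/- Let (P,D) be any MinGMConn instance in which all input points have pairwise distinct x-coordinates and pairwise distinct y-coordinates. Then (1/2)·IR(P,D) ≤ VS(P,D) ≤ 2·opt(P,D). -/
abbrev Pt := ℝ × ℝ
abbrev Dem := Pt × Pt

noncomputable section

/-- ℓ1 distance in the plane. -/
def dist1 (p q : Pt) : ℝ := |p.1 - q.1| + |p.2 - q.2|

/-- Two points are aligned if they are vertically or horizontally aligned. -/
def Aligned (p q : Pt) : Prop := p.1 = q.1 ∨ p.2 = q.2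

/-- `p` and `q` are Manhattan-connected in the point set `S`: the Manhattan graph on `S`
contains a rectilinear path from `p` to `q` of total length `‖p - q‖₁`. -/
def MConnected (S : Set Pt) (p q : Pt) : Prop :=
  ∃ (k : ℕ) (f : Fin (k + 1) → Pt),
    f 0 = p ∧ f (Fin.last k) = q ∧ (∀ i, f i ∈ S) ∧
    (∀ i : Fin k, Aligned (f i.castSucc) (f i.succ)) ∧
    (∑ i : Fin k, dist1 (f i.castSucc) (f i.succ)) = dist1 p q

/-- `Q` is a feasible solution for the instance `(P, D)`. -/
def MFeasible (P : Set Pt) (D : Set Dem) (Q : Set Pt) : Prop :=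
  ∀ d ∈ D, MConnected (P ∪ Q) d.1 d.2

/-- Minimum cardinality of a feasible solution. -/
def optN (P : Set Pt) (D : Set Dem) : ℕ :=
  sInf {n | ∃ Q : Finset Pt, MFeasible P D ↑Q ∧ Q.card = n}

/-- The closed axis-aligned rectangle spanned by `p` and `q`. -/
def Rect (p q : Pt) : Set Pt :=
  {z | min p.1 q.1 ≤ z.1 ∧ z.1 ≤ max p.1 q.1 ∧ min p.2 q.2 ≤ z.2 ∧ z.2 ≤ max p.2 q.2}

/-- The interior of the axis-aligned rectangle spanned by `p` and `q`. -/
def RectInt (p q : Pt) : Set Pt :=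
  {z | min p.1 q.1 < z.1 ∧ z.1 < max p.1 q.1 ∧ min p.2 q.2 < z.2 ∧ z.2 < max p.2 q.2}

/-- The four corners of the rectangle spanned by `p` and `q`. -/
def Corners (p q : Pt) : Set Pt := {(p.1, p.2), (p.1, q.2), (q.1, p.2), (q.1, q.2)}

/-- Two demand rectangles are non-conflicting if neither contains a corner of the other
in its interior. -/
def NonConflicting (d e : Dem) : Prop :=
  (∀ c ∈ Corners e.1 e.2, c ∉ RectInt d.1 d.2) ∧
  (∀ c ∈ Corners d.1 d.2, c ∉ RectInt e.1 e.2)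

/-- `IRN D` : maximum cardinality of an independent (pairwise non-conflicting) subset of `D`. -/
def IRN (D : Set Dem) : ℕ :=
  sSup {n | ∃ D' : Finset Dem, ↑D' ⊆ D ∧ D'.card = n ∧
    ∀ d ∈ D', ∀ e ∈ D', d ≠ e → NonConflicting d e}

/-- The vertical segment at `x = a` spanning the `y`-range between `y1` and `y2`. -/
def VSeg (a y1 y2 : ℝ) : Set Pt :=
  {z | z.1 = a ∧ min y1 y2 ≤ z.2 ∧ z.2 ≤ max y1 y2}

/-- A finite set of demands is vertically separable: its demand rectangles can be ordered
`R₁, …, R_k` with vertical segments `ℓ₁, …, ℓ_k`, where `ℓᵢ` connects the interior of the top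
boundary of `Rᵢ` with the interior of its bottom boundary and avoids `R_j` for all `j > i`. -/
def VertSeparable (D' : Finset Dem) : Prop :=
  ∃ (e : Fin D'.card → Dem) (a : Fin D'.card → ℝ),
    Function.Injective e ∧ (∀ i, e i ∈ D') ∧
    (∀ i, min (e i).1.1 (e i).2.1 < a i ∧ a i < max (e i).1.1 (e i).2.1) ∧
    ∀ i j : Fin D'.card, i < j →
      VSeg (a i) (e i).1.2 (e i).2.2 ∩ Rect (e j).1 (e j).2 = ∅

/-- `VSN D` : maximum cardinality of a vertically separable subset of `D`. -/
def VSN (D : Set Dem) : ℕ :=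
  sSup {n | ∃ D' : Finset Dem, ↑D' ⊆ D ∧ D'.card = n ∧ VertSeparable D'}

/-- `λ(p,q)` : the left vertical side of the demand rectangle `R(p,q)`. -/
def LSeg (d : Dem) : Set Pt := VSeg d.1.1 d.1.2 d.2.2

/-- `ρ(p,q)` : the right vertical side of the demand rectangle `R(p,q)`. -/
def RSeg (d : Dem) : Set Pt := VSeg d.2.1 d.1.2 d.2.2

/-- A left boundary independent set: the left sides are pairwise non-overlapping. -/
def LeftBIS (D' : Finset Dem) : Prop :=
  ∀ d ∈ D', ∀ e ∈ D', d ≠ e → Set.Subsingleton (LSeg d ∩ LSeg e)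

/-- A right boundary independent set: the right sides are pairwise non-overlapping. -/
def RightBIS (D' : Finset Dem) : Prop :=
  ∀ d ∈ D', ∀ e ∈ D', d ≠ e → Set.Subsingleton (RSeg d ∩ RSeg e)

/-- `ISN D` : maximum cardinality of a (left or right) boundary independent subset of `D`. -/
def ISN (D : Set Dem) : ℕ :=
  sSup {n | ∃ D' : Finset Dem, ↑D' ⊆ D ∧ D'.card = n ∧ (LeftBIS D' ∨ RightBIS D')}

/-- `(P, D)` is a MinGMConn instance: demands are between input points, ordered by
`x`-coordinate. -/
def IsInstance (P : Finset Pt) (D : Finset Dem) : Prop :=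
  ∀ d ∈ D, d.1 ∈ P ∧ d.2 ∈ P ∧ d.1.1 < d.2.1

/-- The points of `P` have pairwise distinct `x`-coordinates. -/
def DistinctX (P : Finset Pt) : Prop := ∀ p ∈ P, ∀ q ∈ P, p ≠ q → p.1 ≠ q.1

/-- The points of `P` have pairwise distinct `y`-coordinates. -/
def DistinctY (P : Finset Pt) : Prop := ∀ p ∈ P, ∀ q ∈ P, p ≠ q → p.2 ≠ q.2

end

noncomputable section

/-- The `i`-th open vertical strip determined by boundaries `b` (with `b 0 = ⊥`, `b s = ⊤`). -/
def strip (s : ℕ) (b : Fin (s + 1) → EReal) (i : Fin s) : Set Pt :=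
  {z | b i.castSucc < (z.1 : EReal) ∧ (z.1 : EReal) < b i.succ}

/-- `b` describes a strip subdivision into `s` vertical strips via `s - 1` vertical lines,
none of which passes through a point of `P`. -/
def IsStripSubdivision (s : ℕ) (b : Fin (s + 1) → EReal) (P : Finset Pt) : Prop :=
  1 ≤ s ∧ StrictMono b ∧ b 0 = ⊥ ∧ b (Fin.last s) = ⊤ ∧
    ∀ p ∈ P, ∀ i : Fin (s + 1), (p.1 : EReal) ≠ b i

/-- The projections `π_𝒮(P)` of the points of `P` onto the adjacent strip boundaries. -/
def stripProj (s : ℕ) (b : Fin (s + 1) → EReal) (P : Set Pt) : Set Pt :=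
  {z | ∃ p ∈ P, ∃ i : Fin s, p ∈ strip s b i ∧
    ((i.val ≠ 0 ∧ z = ((b i.castSucc).toReal, p.2)) ∨
     (i.val + 1 ≠ s ∧ z = ((b i.succ).toReal, p.2)))}

/-- The demand set `π_𝒮(D)` of the inter-strip instance: demands between points in
different, non-adjacent strips, projected to the adjacent strip boundaries. -/
def stripDem (s : ℕ) (b : Fin (s + 1) → EReal) (D : Set Dem) : Set Dem :=
  {d | ∃ pq ∈ D, ∃ i j : Fin s,
    pq.1 ∈ strip s b i ∧ pq.2 ∈ strip s b j ∧ i.val + 2 ≤ j.val ∧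
    d = (((b i.succ).toReal, pq.1.2), ((b j.castSucc).toReal, pq.2.2))}

/-- `p 0, …, p n` form a triangular instance of size `n` :
`x`-coordinates strictly increasing, while `p 1, …, p n` form a descending diagonal
lying to the top-right of `p 0`. -/
def IsTriangular (n : ℕ) (p : Fin (n + 1) → Pt) : Prop :=
  (∀ i j : Fin (n + 1), i < j → (p i).1 < (p j).1) ∧
  (∀ i j : Fin (n + 1), i ≠ 0 → i < j → (p j).2 < (p i).2) ∧
  (∀ i : Fin (n + 1), i ≠ 0 → (p 0).2 < (p i).2)

/-- The point set of a triangular instance. -/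
def triP (n : ℕ) (p : Fin (n + 1) → Pt) : Finset Pt := Finset.image p Finset.univ

/-- The demand set of a triangular instance: `(p 0, p i)` for `1 ≤ i ≤ n`. -/
def triD (n : ℕ) (p : Fin (n + 1) → Pt) : Finset Dem :=
  Finset.image (fun i => (p 0, p i)) (Finset.univ.filter fun i : Fin (n + 1) => i ≠ 0)

/-- The triangular grid of a triangular instance. -/
def triGrid (n : ℕ) (p : Fin (n + 1) → Pt) : Set Pt :=
  {z | (∃ i, z.1 = (p i).1) ∧ (∃ j, z.2 = (p j).2) ∧
    ∃ i : Fin (n + 1), i ≠ 0 ∧ z ∈ Rect (p 0) (p i)}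

/-- `Q` is arboreally satisfied: for every non-aligned pair of its points, the rectangle
they span contains a third point of `Q`. -/
def ArboreallySatisfied (Q : Finset Pt) : Prop :=
  ∀ p ∈ Q, ∀ q ∈ Q, ¬ Aligned p q → ∃ r ∈ Q, r ≠ p ∧ r ≠ q ∧ r ∈ Rect p q

/-- The Manhattan graph on a finite point set `S`. -/
def manhattanGraph (S : Finset Pt) : SimpleGraph {x : Pt // x ∈ S} where
  Adj a b := a ≠ b ∧ Aligned a.1 b.1
  symm := ⟨fun _ _ h => ⟨h.1.symm, h.2.imp Eq.symm Eq.symm⟩⟩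
  loopless := ⟨fun _ h => h.1 rfl⟩

/-- The demand graph of an instance `(P, D)`. -/
def demandGraph (P : Finset Pt) (D : Finset Dem) : SimpleGraph {x : Pt // x ∈ P} where
  Adj a b := a ≠ b ∧ (((a : Pt), (b : Pt)) ∈ D ∨ ((b : Pt), (a : Pt)) ∈ D)
  symm := ⟨fun _ _ h => ⟨h.1.symm, h.2.symm⟩⟩
  loopless := ⟨fun _ h => h.1 rfl⟩

/-- `C` is an axis-aligned rectangle: a product of two intervals. -/
def IsAxisRect (C : Set Pt) : Prop :=
  ∃ I J : Set ℝ, I.OrdConnected ∧ J.OrdConnected ∧ C = I ×ˢ J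

end

/-!
A shortest rectilinear path for a demand crosses every vertical line through the interior of the
demand rectangle by a horizontal edge, so the separating segment `ℓᵢ` of a vertically separable
family lies in a gap between two consecutive points of `P ∪ Q` on some row. Separability makes
these gaps pairwise distinct (a later rectangle spanning the same gap would meet `ℓᵢ`), and since
a row carries at most one input point, distinct gaps can be charged to distinct points of `Q`.
Hence `VS ≤ opt`.

An independent family splits into ascending and descending rectangles, and the reflection
`y ↦ -y` turns the second kind into the first. An independent family of ascending rectangles is
vertically separable: the rectangle reaching farthest right, and among those the one starting
farthest left, has a vertical chord missing all other rectangles. Indeed, a rectangle meeting that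
chord would overlap it, or a rectangle sharing its lower-left corner, in a staggered way, which
puts a corner of one of the two inside the other. Hence `IR ≤ 2 VS`.
-/

theorem DistinctY.eq_of_snd_eq {P : Finset Pt} (hY : DistinctY P) {p q : Pt} (hp : p ∈ P)
    (hq : q ∈ P) (h : p.2 = q.2) : p = q :=
  by_contra fun hne => hY p hp q hq hne h

theorem DistinctX.eq_of_fst_eq {P : Finset Pt} (hX : DistinctX P) {p q : Pt} (hp : p ∈ P)
    (hq : q ∈ P) (h : p.1 = q.1) : p = q :=
  by_contra fun hne => hX p hp q hq hne h

theorem DistinctY.snd_ne_of_fst_ne {P : Finset Pt} (hY : DistinctY P) {p q : Pt} (hp : p ∈ P)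
    (hq : q ∈ P) (h : p.1 ≠ q.1) : p.2 ≠ q.2 :=
  hY p hp q hq fun hpq => h (congrArg Prod.fst hpq)

theorem dist1_self (p : Pt) : dist1 p p = 0 := by
  simp [dist1]

theorem dist1_triangle (x y z : Pt) : dist1 x z ≤ dist1 x y + dist1 y z := by
  unfold dist1
  linarith [abs_sub_le x.1 y.1 z.1, abs_sub_le x.2 y.2 z.2]

theorem min_le_and_le_max_of_abs_sub_add_abs_sub_le {a b z : ℝ}
    (h : |a - z| + |z - b| ≤ |a - b|) : min a b ≤ z ∧ z ≤ max a b := by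
  rcases le_total a b with hab | hab <;>
  · simp only [hab, min_eq_left, min_eq_right, max_eq_left, max_eq_right]
    cases abs_cases (a - z) <;> cases abs_cases (z - b) <;> cases abs_cases (a - b) <;>
      constructor <;> linarith

theorem mem_Rect_of_dist1_add_dist1_le {p q z : Pt} (h : dist1 p z + dist1 z q ≤ dist1 p q) :
    z ∈ Rect p q := by
  unfold dist1 at h
  have hx := min_le_and_le_max_of_abs_sub_add_abs_sub_le (a := p.1) (b := q.1) (z := z.1)
    (by linarith [abs_sub_le p.2 z.2 q.2])
  have hy := min_le_and_le_max_of_abs_sub_add_abs_sub_le (a := p.2) (b := q.2) (z := z.2)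
    (by linarith [abs_sub_le p.1 z.1 q.1])
  exact ⟨hx.1, hx.2, hy.1, hy.2⟩

theorem dist1_add_dist1_le_sum {k : ℕ} (f : Fin (k + 1) → Pt) (s : Fin (k + 1)) :
    dist1 (f 0) (f s) + dist1 (f s) (f (Fin.last k)) ≤
      ∑ i : Fin k, dist1 (f i.castSucc) (f i.succ) := by
  induction k with
  | zero =>
    obtain rfl : s = 0 := Fin.fin_one_eq_zero s
    simp [dist1_self]
  | succ k ih =>
    have ih' := ih (fun i => f i.castSucc)
    simp only [Fin.castSucc_zero, ← Fin.succ_castSucc] at ih'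
    rw [Fin.sum_univ_castSucc, Fin.succ_last]
    induction s using Fin.lastCases with
    | last =>
      have := ih' (Fin.last k)
      linarith [dist1_triangle (f 0) (f (Fin.last k).castSucc) (f (Fin.last (k + 1))),
        dist1_self (f (Fin.last k).castSucc), dist1_self (f (Fin.last (k + 1)))]
    | cast s =>
      linarith [ih' s,
        dist1_triangle (f s.castSucc) (f (Fin.last k).castSucc) (f (Fin.last (k + 1)))]

theorem exists_castSucc_lt_le_succ {k : ℕ} (x : Fin (k + 1) → ℝ) {a : ℝ} (h0 : x 0 < a)
    (hk : a ≤ x (Fin.last k)) : ∃ i : Fin k, x i.castSucc < a ∧ a ≤ x i.succ := by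
  induction k with
  | zero => exact absurd (h0.trans_le hk) (lt_irrefl _)
  | succ k ih =>
    by_cases hlast : a ≤ x (Fin.last k).castSucc
    · obtain ⟨i, hi⟩ := ih (fun i => x i.castSucc) h0 hlast
      exact ⟨i.castSucc, hi⟩
    · exact ⟨Fin.last k, not_le.mp hlast, hk⟩

theorem MConnected.exists_path_mem_Rect {S : Set Pt} {p q : Pt} (h : MConnected S p q) :
    ∃ (k : ℕ) (f : Fin (k + 1) → Pt), f 0 = p ∧ f (Fin.last k) = q ∧ (∀ i, f i ∈ S) ∧
      (∀ i : Fin k, Aligned (f i.castSucc) (f i.succ)) ∧ ∀ i, f i ∈ Rect p q := by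
  obtain ⟨k, f, h0, hk, hS, hal, hlen⟩ := h
  refine ⟨k, f, h0, hk, hS, hal, fun i => mem_Rect_of_dist1_add_dist1_le ?_⟩
  simpa only [h0, hk, hlen] using dist1_add_dist1_le_sum f i

theorem MConnected.exists_horizontal_crossing {S : Set Pt} {p q : Pt} (h : MConnected S p q)
    {a : ℝ} (hpa : p.1 < a) (haq : a ≤ q.1) :
    ∃ u ∈ S, ∃ v ∈ S, v.2 = u.2 ∧ u.1 < a ∧ a ≤ v.1 ∧ u ∈ Rect p q ∧ v ∈ Rect p q := by
  obtain ⟨k, f, h0, hk, hS, hal, hR⟩ := h.exists_path_mem_Rect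
  obtain ⟨i, hi, hi'⟩ := exists_castSucc_lt_le_succ (fun j => (f j).1) (a := a)
    (by simpa [h0] using hpa) (by simpa [hk] using haq)
  refine ⟨_, hS i.castSucc, _, hS i.succ, ?_, hi, hi', hR _, hR _⟩
  -- a vertical step cannot cross the line `x = a`
  exact (hal i).resolve_left (fun hx => absurd (hx ▸ hi) (not_lt.mpr hi')) |>.symm

theorem exists_nearest_left {S : Finset Pt} {z₀ : Pt} (hz₀ : z₀ ∈ S) {a : ℝ} (ha : z₀.1 < a) :
    ∃ l ∈ S, l.2 = z₀.2 ∧ l.1 < a ∧ ∀ z ∈ S, z.2 = z₀.2 → z.1 < a → z.1 ≤ l.1 := by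
  classical
  obtain ⟨l, hl, hmax⟩ := (S.filter fun z => z.2 = z₀.2 ∧ z.1 < a).exists_max_image Prod.fst
    ⟨z₀, Finset.mem_filter.mpr ⟨hz₀, rfl, ha⟩⟩
  obtain ⟨hl, hrow, hla⟩ := Finset.mem_filter.mp hl
  exact ⟨l, hl, hrow, hla, fun z hz hzrow hza => hmax z (Finset.mem_filter.mpr ⟨hz, hzrow, hza⟩)⟩

theorem exists_nearest_right {S : Finset Pt} {z₀ : Pt} (hz₀ : z₀ ∈ S) {a : ℝ} (ha : a ≤ z₀.1) :
    ∃ r ∈ S, r.2 = z₀.2 ∧ a ≤ r.1 ∧ ∀ z ∈ S, z.2 = z₀.2 → a ≤ z.1 → r.1 ≤ z.1 := by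
  classical
  obtain ⟨r, hr, hmin⟩ := (S.filter fun z => z.2 = z₀.2 ∧ a ≤ z.1).exists_min_image Prod.fst
    ⟨z₀, Finset.mem_filter.mpr ⟨hz₀, rfl, ha⟩⟩
  obtain ⟨hr, hrow, har⟩ := Finset.mem_filter.mp hr
  exact ⟨r, hr, hrow, har, fun z hz hzrow hza => hmin z (Finset.mem_filter.mpr ⟨hz, hzrow, hza⟩)⟩

theorem card_le_card_of_gaps {ι : Type*} [Fintype ι] {P Q : Finset Pt} (hY : DistinctY P)
    (l r : ι → Pt) (hl : ∀ i, l i ∈ P ∪ Q) (hr : ∀ i, r i ∈ P ∪ Q)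
    (hrow : ∀ i, (r i).2 = (l i).2) (hlr : ∀ i, (l i).1 < (r i).1)
    (hl_inj : Function.Injective l) (hr_inj : Function.Injective r) :
    Fintype.card ι ≤ Q.card := by
  classical
  -- gaps right of the point of `P` on their row are charged to their right end, the others to
  -- their left end
  let PLeft : ι → Prop := fun i => ∃ π ∈ P, π.2 = (l i).2 ∧ π.1 ≤ (l i).1
  let φ : ι → Pt := fun i => if PLeft i then r i else l i
  have hφQ : ∀ i, φ i ∈ Q := by
    intro i
    by_cases hπ : PLeft i
    · simp only [φ, if_pos hπ]
      obtain ⟨π, hπP, hπrow, hπl⟩ := hπ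
      refine (Finset.mem_union.mp (hr i)).resolve_left fun hrP => ?_
      have := hY.eq_of_snd_eq hπP hrP (hπrow.trans (hrow i).symm)
      linarith [congrArg Prod.fst this, hlr i]
    · simp only [φ, if_neg hπ]
      exact (Finset.mem_union.mp (hl i)).resolve_left fun hlP => hπ ⟨l i, hlP, rfl, le_rfl⟩
  have hmixed : ∀ i j, PLeft i → ¬ PLeft j → r i ≠ l j := by
    rintro i j ⟨π, hπP, hπrow, hπl⟩ hj hrl
    refine hj ⟨π, hπP, ?_, ?_⟩
    · rw [hπrow, ← hrow i, hrl]
    · linarith [hlr i, congrArg Prod.fst hrl]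
  have hφ : Function.Injective φ := by
    intro i j hij
    by_cases hi : PLeft i <;> by_cases hj : PLeft j <;>
      simp only [φ, hi, hj, if_true, if_false] at hij
    · exact hr_inj hij
    · exact absurd hij (hmixed i j hi hj)
    · exact absurd hij.symm (hmixed j i hj hi)
    · exact hl_inj hij
  rw [← Finset.card_univ]
  exact Finset.card_le_card_of_injOn φ (fun i _ => hφQ i) hφ.injOn

theorem card_le_card_of_horizontal_crossings {ι : Type*} [Fintype ι] [LinearOrder ι]
    {P Q : Finset Pt} (hY : DistinctY P) (u v : ι → Pt) (a : ι → ℝ)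
    (hu : ∀ i, u i ∈ P ∪ Q) (hv : ∀ i, v i ∈ P ∪ Q) (hrow : ∀ i, (v i).2 = (u i).2)
    (hua : ∀ i, (u i).1 < a i) (hav : ∀ i, a i ≤ (v i).1)
    (hsep : ∀ i j, i < j → (u i).2 = (u j).2 → (u j).1 ≤ a i → a i ≤ (v j).1 → False) :
    Fintype.card ι ≤ Q.card := by
  choose l hl hlrow hla hlmax using fun i => exists_nearest_left (hu i) (hua i)
  choose r hr hrrow har hrmin using fun i => exists_nearest_right (hv i) (hav i)
  refine card_le_card_of_gaps hY l r hl hr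
    (fun i => (hrrow i).trans ((hrow i).trans (hlrow i).symm))
    (fun i => (hla i).trans_le (har i)) (Function.Injective.of_lt_imp_ne fun i j hij hlij => ?_)
    (Function.Injective.of_lt_imp_ne fun i j hij hrij => ?_)
  · have hc : (u i).2 = (u j).2 := by rw [← hlrow i, hlij, hlrow j]
    refine hsep i j hij hc ?_ (not_lt.mp fun hlt => ?_)
    · linarith [hlmax j (u j) (hu j) rfl (hua j), hla i, congrArg Prod.fst hlij]
    · linarith [hlmax i (v j) (hv j) ((hrow j).trans hc.symm) hlt, hla j, hav j,
        congrArg Prod.fst hlij]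
  · have hc : (u i).2 = (u j).2 := by
      rw [← hrow i, ← hrrow i, hrij, hrrow j, hrow j]
    refine hsep i j hij hc (not_lt.mp fun hlt => ?_) ?_
    · linarith [hrmin i (u j) (hu j) (hrow i ▸ hc.symm) hlt.le, har j, hua j,
        congrArg Prod.fst hrij]
    · linarith [hrmin j (v j) (hv j) rfl (hav j), har i, congrArg Prod.fst hrij]

theorem VertSeparable.card_le_card {P Q : Finset Pt} {D' : Finset Dem} (hY : DistinctY P)
    (hvs : VertSeparable D') (hx : ∀ d ∈ D', d.1.1 < d.2.1)
    (hQ : ∀ d ∈ D', MConnected (↑P ∪ ↑Q) d.1 d.2) : D'.card ≤ Q.card := by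
  classical
  obtain ⟨e, a, -, he, ha, hsep⟩ := hvs
  have hcross : ∀ i, ∃ u ∈ (↑P ∪ ↑Q : Set Pt), ∃ v ∈ (↑P ∪ ↑Q : Set Pt), v.2 = u.2 ∧
      u.1 < a i ∧ a i ≤ v.1 ∧ u ∈ Rect (e i).1 (e i).2 ∧ v ∈ Rect (e i).1 (e i).2 := by
    intro i
    have hxi := hx _ (he i)
    have hai := ha i
    rw [min_eq_left hxi.le, max_eq_right hxi.le] at hai
    exact (hQ _ (he i)).exists_horizontal_crossing hai.1 hai.2.le
  choose u hu v hv hrow hua hav huR hvR using hcross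
  simpa using card_le_card_of_horizontal_crossings hY u v a (by simpa using hu)
    (by simpa using hv) hrow hua hav fun i j hij hc huj hvj =>
      Set.eq_empty_iff_forall_notMem.mp (hsep i j hij) (a i, (u i).2) ⟨⟨rfl, (huR i).2.2⟩,
        (huR j).1.trans huj, hvj.trans (hvR j).2.1, hc ▸ (huR j).2.2⟩

theorem mFeasible_image_corner {P : Finset Pt} {D : Finset Dem} (hinst : IsInstance P D) :
    MFeasible ↑P ↑D ↑(D.image fun d => ((d.2.1, d.1.2) : Pt)) := by
  classical
  intro d hd
  have hdP := hinst d hd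
  refine ⟨2, ![d.1, (d.2.1, d.1.2), d.2], rfl, rfl, ?_, ?_, ?_⟩
  · intro i
    fin_cases i
    · exact Or.inl hdP.1
    · exact Or.inr (Finset.mem_image_of_mem _ hd)
    · exact Or.inl hdP.2.1
  · intro i
    fin_cases i
    · exact Or.inr rfl
    · exact Or.inl rfl
  · simp [Fin.sum_univ_two, dist1]

theorem exists_card_eq_optN {P : Finset Pt} {D : Finset Dem} (hinst : IsInstance P D) :
    ∃ Q : Finset Pt, MFeasible ↑P ↑D ↑Q ∧ Q.card = optN ↑P ↑D :=
  Nat.sInf_mem (s := {n | ∃ Q : Finset Pt, MFeasible ↑P ↑D ↑Q ∧ Q.card = n})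
    ⟨_, _, mFeasible_image_corner hinst, rfl⟩

theorem VSN_le_optN {P : Finset Pt} {D : Finset Dem} (hinst : IsInstance P D)
    (hY : DistinctY P) : VSN ↑D ≤ optN ↑P ↑D := by
  obtain ⟨Q, hQ, hQcard⟩ := exists_card_eq_optN hinst
  refine csSup_le' ?_
  rintro _ ⟨D', hD', rfl, hvs⟩
  rw [← hQcard]
  exact hvs.card_le_card hY (fun d hd => (hinst d (hD' hd)).2.2) fun d hd => hQ d (hD' hd)

def IsAscending (d : Dem) : Prop := d.1.1 < d.2.1 ∧ d.1.2 < d.2.2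

theorem mem_RectInt_of_lt {p q z : Pt} (hx₁ : p.1 < z.1) (hx₂ : z.1 < q.1) (hy₁ : p.2 < z.2)
    (hy₂ : z.2 < q.2) : z ∈ RectInt p q :=
  ⟨(min_le_left _ _).trans_lt hx₁, hx₂.trans_le (le_max_right _ _),
    (min_le_left _ _).trans_lt hy₁, hy₂.trans_le (le_max_right _ _)⟩

theorem not_nonConflicting_of_staggered {d e : Dem} (hx₁ : d.1.1 < e.1.1) (hx₂ : e.1.1 < d.2.1)
    (hx₃ : d.2.1 < e.2.1) (hy₁ : e.1.2 < d.2.2) (hy₂ : d.1.2 < e.2.2) (h₁ : d.1.2 ≠ e.1.2)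
    (h₂ : d.2.2 ≠ e.2.2) : ¬ NonConflicting d e := by
  rintro ⟨hde, hed⟩
  rcases h₁.lt_or_gt with hbot | hbot
  · exact hde e.1 (by simp [Corners]) (mem_RectInt_of_lt hx₁ hx₂ hbot hy₁)
  rcases h₂.lt_or_gt with htop | htop
  · exact hed d.2 (by simp [Corners]) (mem_RectInt_of_lt hx₂ hx₃ hy₁ htop)
  · exact hde (e.1.1, e.2.2) (by simp [Corners]) (mem_RectInt_of_lt hx₁ hx₂ hy₂ htop)

theorem le_of_VSeg_inter_Rect_nonempty {a : ℝ} {d e : Dem} (hd : d.1.2 ≤ d.2.2)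
    (he : IsAscending e) (h : (VSeg a d.1.2 d.2.2 ∩ Rect e.1 e.2).Nonempty) :
    e.1.1 ≤ a ∧ a ≤ e.2.1 ∧ d.1.2 ≤ e.2.2 ∧ e.1.2 ≤ d.2.2 := by
  obtain ⟨z, ⟨rfl, hz₁, hz₂⟩, hx₁, hx₂, hy₁, hy₂⟩ := h
  simp only [min_eq_left hd, max_eq_right hd, min_eq_left he.1.le, max_eq_right he.1.le,
    min_eq_left he.2.le, max_eq_right he.2.le] at *
  exact ⟨hx₁, hx₂, hz₁.trans hy₂, hy₁.trans hz₂⟩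

theorem exists_gt_forall_lt_of_gt (M : ℝ) (S : Finset ℝ) :
    ∃ a, M < a ∧ ∀ s ∈ S, M < s → a < s := by
  classical
  set T := insert (M + 1) (S.filter (M < ·))
  have hT : ∀ t ∈ T, M < t := by
    simp only [T, Finset.mem_insert, Finset.mem_filter]
    rintro t (rfl | ⟨-, ht⟩) <;> linarith
  have hM := hT _ (T.min'_mem (Finset.insert_nonempty _ _))
  refine ⟨(M + T.min' (Finset.insert_nonempty _ _)) / 2, by linarith, fun s hs hMs => ?_⟩
  have := T.min'_le s (Finset.mem_insert_of_mem (Finset.mem_filter.mpr ⟨hs, hMs⟩))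
  linarith

structure AscendingFamily (PS : Finset Pt) (F : Finset Dem) : Prop where
  distinctX : DistinctX PS
  distinctY : DistinctY PS
  mem : ∀ d ∈ F, d.1 ∈ PS ∧ d.2 ∈ PS
  ascending : ∀ d ∈ F, IsAscending d
  nonConflicting : ∀ d ∈ F, ∀ e ∈ F, d ≠ e → NonConflicting d e

theorem NonConflicting.snd_lt_of_fst_eq {d e : Dem} (hnc : NonConflicting d e)
    (he : IsAscending e) (hed : e.1 = d.1) (hx : e.2.1 < d.2.1) (hy : e.2.2 ≠ d.2.2) :
    d.2.2 < e.2.2 :=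
  lt_of_le_of_ne (not_lt.mp fun hlt => hnc.1 e.2 (by simp [Corners])
    (mem_RectInt_of_lt (hed ▸ he.1) hx (hed ▸ he.2) hlt)) hy.symm

namespace AscendingFamily

variable {PS : Finset Pt} {F : Finset Dem}

theorem mono (hF : AscendingFamily PS F) {F' : Finset Dem} (h : F' ⊆ F) :
    AscendingFamily PS F' :=
  ⟨hF.distinctX, hF.distinctY, fun d hd => hF.mem d (h hd), fun d hd => hF.ascending d (h hd),
    fun d hd e he => hF.nonConflicting d (h hd) e (h he)⟩

theorem lt_of_fst_eq (hF : AscendingFamily PS F) {d e : Dem} (hd : d ∈ F)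
    (hright : ∀ e ∈ F, e.2.1 ≤ d.2.1) (he : e ∈ F) (hed : e.1 = d.1) (hne : e ≠ d) :
    e.2.1 < d.2.1 ∧ d.2.2 < e.2.2 := by
  have hwq : e.2.1 < d.2.1 := (hright e he).lt_of_ne fun h =>
    hne (Prod.ext hed (hF.distinctX.eq_of_fst_eq (hF.mem e he).2 (hF.mem d hd).2 h))
  exact ⟨hwq, (hF.nonConflicting d hd e he hne.symm).snd_lt_of_fst_eq (hF.ascending e he) hed
    hwq (hF.distinctY.snd_ne_of_fst_ne (hF.mem e he).2 (hF.mem d hd).2 hwq.ne)⟩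

theorem VSeg_inter_Rect_eq_empty (hF : AscendingFamily PS F) {d : Dem} (hd : d ∈ F)
    (hright : ∀ e ∈ F, e.2.1 ≤ d.2.1) (hleft : ∀ e ∈ F, e.2 = d.2 → d.1.1 ≤ e.1.1) {M a : ℝ}
    (hpM : d.1.1 ≤ M) (hshareM : ∀ e ∈ F, e.1 = d.1 → e ≠ d → e.2.1 ≤ M)
    (hM : M = d.1.1 ∨ ∃ f ∈ F, f.1 = d.1 ∧ f ≠ d ∧ f.2.1 = M) (hMa : M < a)
    (ha : ∀ e ∈ F, M < e.1.1 → a < e.1.1) {e : Dem} (he : e ∈ F) (hne : e ≠ d) :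
    VSeg a d.1.2 d.2.2 ∩ Rect e.1 e.2 = ∅ := by
  have ⟨hX, hY, hPS, hasc, hnc⟩ := hF
  refine Set.not_nonempty_iff_eq_empty.mp fun hmeet => ?_
  obtain ⟨hua, haw, hpw, huq⟩ := le_of_VSeg_inter_Rect_nonempty (hasc d hd).2.le (hasc e he) hmeet
  obtain ⟨hp, hq⟩ := hPS d hd
  obtain ⟨hu, hw⟩ := hPS e he
  by_cases hep : e.1 = d.1
  · linarith [hshareM e he hep hne]
  have huM : e.1.1 ≤ M := not_lt.mp fun h => absurd (ha e he h) (not_lt.mpr hua)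
  have hup : e.1.1 ≠ d.1.1 := fun h => hep (hX.eq_of_fst_eq hu hp h)
  rcases hup.lt_or_gt with hup | hup
  · have hwq : e.2.1 < d.2.1 := (hright e he).lt_of_ne fun h =>
      absurd (hleft e he (hX.eq_of_fst_eq hw hq h)) (not_le.mpr hup)
    exact not_nonConflicting_of_staggered hup (by linarith) hwq
      (hpw.lt_of_ne (hY.snd_ne_of_fst_ne hp hw (by linarith)))
      (huq.lt_of_ne (hY.snd_ne_of_fst_ne hu hq (by linarith)))
      (hY.snd_ne_of_fst_ne hu hp hup.ne) (hY.snd_ne_of_fst_ne hw hq hwq.ne)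
      (hnc e he d hd hne)
  -- `e` starts right of `d`, hence before the right side of a rectangle `f` sharing the
  -- lower-left corner of `d`, which it then crosses
  obtain ⟨f, hf, hfp, hfne, hfM⟩ := hM.resolve_left (by linarith)
  have hqf := (hF.lt_of_fst_eq hd hright hf hfp hfne).2
  have huv : e.1.1 < f.2.1 := hfM ▸ huM.lt_of_ne fun h => by
    linarith [congrArg Prod.snd (hX.eq_of_fst_eq hu (hPS f hf).2 (h.trans hfM.symm))]
  exact not_nonConflicting_of_staggered (hfp ▸ hup) huv (by linarith) (by linarith)
    (hfp ▸ hpw.lt_of_ne (hY.snd_ne_of_fst_ne hp hw (by linarith)))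
    (hfp ▸ hY.snd_ne_of_fst_ne hp hu hup.ne) (hY.snd_ne_of_fst_ne (hPS f hf).2 hw (by linarith))
    (hnc f hf e he fun hfe => hep (hfe ▸ hfp))

theorem exists_free_chord (hF : AscendingFamily PS F) {d : Dem} (hd : d ∈ F)
    (hright : ∀ e ∈ F, e.2.1 ≤ d.2.1) (hleft : ∀ e ∈ F, e.2 = d.2 → d.1.1 ≤ e.1.1) :
    ∃ a, d.1.1 < a ∧ a < d.2.1 ∧ ∀ e ∈ F, e ≠ d → VSeg a d.1.2 d.2.2 ∩ Rect e.1 e.2 = ∅ := by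
  classical
  -- the chord goes just right of all rectangles sharing the lower-left corner of `d`
  set G := F.filter fun e => e.1 = d.1 ∧ e ≠ d
  set M := (insert d.1.1 (G.image fun e => e.2.1)).max' (Finset.insert_nonempty _ _)
  have hpM : d.1.1 ≤ M := Finset.le_max' _ _ (Finset.mem_insert_self _ _)
  have hshareM : ∀ e ∈ F, e.1 = d.1 → e ≠ d → e.2.1 ≤ M := fun e he hed hne =>
    Finset.le_max' _ e.2.1 (Finset.mem_insert_of_mem
      (Finset.mem_image_of_mem (·.2.1) (Finset.mem_filter.mpr ⟨he, hed, hne⟩)))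
  have hM : M = d.1.1 ∨ ∃ f ∈ F, f.1 = d.1 ∧ f ≠ d ∧ f.2.1 = M := by
    rcases Finset.mem_insert.mp (Finset.max'_mem (insert d.1.1 (G.image fun e => e.2.1))
      (Finset.insert_nonempty _ _)) with h | h
    · exact Or.inl h
    · obtain ⟨f, hf, hfM⟩ := Finset.mem_image.mp h
      obtain ⟨hf, hfd, hfne⟩ := Finset.mem_filter.mp hf
      exact Or.inr ⟨f, hf, hfd, hfne, hfM⟩
  have hMq : M < d.2.1 := by
    rcases hM with hM | ⟨f, hf, hfd, hfne, hfM⟩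
    · exact hM ▸ (hF.ascending d hd).1
    · exact hfM ▸ (hF.lt_of_fst_eq hd hright hf hfd hfne).1
  obtain ⟨a, hMa, ha⟩ := exists_gt_forall_lt_of_gt M (insert d.2.1 (F.image fun e => e.1.1))
  exact ⟨a, hpM.trans_lt hMa, ha _ (Finset.mem_insert_self _ _) hMq, fun e he hne =>
    hF.VSeg_inter_Rect_eq_empty hd hright hleft hpM hshareM hM hMa
      (fun e he => ha _ (Finset.mem_insert_of_mem (Finset.mem_image_of_mem _ he))) he hne⟩

end AscendingFamily

theorem vertSeparable_empty : VertSeparable ∅ :=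
  ⟨Fin.elim0, Fin.elim0, fun i => i.elim0, fun i => i.elim0, fun i => i.elim0,
    fun i => i.elim0⟩

theorem VertSeparable.of_erase {D' : Finset Dem} {d : Dem} (hd : d ∈ D') {a : ℝ}
    (ha : min d.1.1 d.2.1 < a ∧ a < max d.1.1 d.2.1)
    (hfree : ∀ e ∈ D', e ≠ d → VSeg a d.1.2 d.2.2 ∩ Rect e.1 e.2 = ∅)
    (h : VertSeparable (D'.erase d)) : VertSeparable D' := by
  obtain ⟨e, b, hinj, he, hb, hsep⟩ := h
  have hcard : D'.card = (D'.erase d).card + 1 := (Finset.card_erase_add_one hd).symm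
  let E : Fin ((D'.erase d).card + 1) → Dem := Fin.cons d e
  let A : Fin ((D'.erase d).card + 1) → ℝ := Fin.cons a b
  have hE : ∀ k, E k ∈ D' :=
    Fin.forall_fin_succ.mpr ⟨hd, fun i => Finset.mem_of_mem_erase (he i)⟩
  have hA : ∀ k, min (E k).1.1 (E k).2.1 < A k ∧ A k < max (E k).1.1 (E k).2.1 :=
    Fin.forall_fin_succ.mpr ⟨ha, hb⟩
  have hsepE : ∀ k l, k < l → VSeg (A k) (E k).1.2 (E k).2.2 ∩ Rect (E l).1 (E l).2 = ∅ := by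
    intro k l hkl
    induction l using Fin.cases with
    | zero => exact absurd hkl (Fin.not_lt_zero _)
    | succ l =>
      induction k using Fin.cases with
      | zero => exact hfree _ (Finset.mem_of_mem_erase (he l)) (Finset.ne_of_mem_erase (he l))
      | succ k => exact hsep k l (Fin.succ_lt_succ_iff.mp hkl)
  refine ⟨E ∘ Fin.cast hcard, A ∘ Fin.cast hcard,
    (Fin.cons_injective_iff.mpr ⟨?_, hinj⟩).comp (Fin.cast_injective hcard), fun i => hE _,
    fun i => hA _, fun i j hij => hsepE _ _ ((Fin.cast_lt_cast hcard).mpr hij)⟩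
  rintro ⟨i, hi⟩
  exact Finset.notMem_erase d D' (hi ▸ he i)

theorem AscendingFamily.vertSeparable {PS : Finset Pt} {F : Finset Dem}
    (hF : AscendingFamily PS F) : VertSeparable F := by
  classical
  induction F using Finset.strongInduction with
  | H F ih =>
  rcases F.eq_empty_or_nonempty with rfl | hne
  · exact vertSeparable_empty
  obtain ⟨d₁, hd₁, hright⟩ := F.exists_max_image (·.2.1) hne
  obtain ⟨d, hd, hleft⟩ := (F.filter (·.2 = d₁.2)).exists_min_image (·.1.1)
    ⟨d₁, Finset.mem_filter.mpr ⟨hd₁, rfl⟩⟩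
  obtain ⟨hd, hdd₁⟩ := Finset.mem_filter.mp hd
  obtain ⟨a, hda, had, hfree⟩ := hF.exists_free_chord hd (fun e he => hdd₁ ▸ hright e he)
    (fun e he hed => hleft e (Finset.mem_filter.mpr ⟨he, hed.trans hdd₁⟩))
  have hdx := (hF.ascending d hd).1.le
  refine VertSeparable.of_erase hd ?_ hfree
    (ih _ (Finset.erase_ssubset hd) (hF.mono (Finset.erase_subset d F)))
  rw [min_eq_left hdx, max_eq_right hdx]
  exact ⟨hda, had⟩

def flipY (z : Pt) : Pt := (z.1, -z.2)

def flipDem (d : Dem) : Dem := (flipY d.1, flipY d.2)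

theorem flipDem_flipDem (d : Dem) : flipDem (flipDem d) = d := by
  simp [flipDem, flipY]

theorem flipDem_injective : Function.Injective flipDem :=
  Function.LeftInverse.injective flipDem_flipDem

theorem preimage_flipY_VSeg (a y₁ y₂ : ℝ) : flipY ⁻¹' VSeg a y₁ y₂ = VSeg a (-y₁) (-y₂) := by
  ext z
  simp only [VSeg, flipY, Set.mem_preimage, Set.mem_ofPred_eq, min_neg_neg, max_neg_neg]
  constructor <;> rintro ⟨h₁, h₂, h₃⟩ <;> exact ⟨h₁, by linarith, by linarith⟩

theorem preimage_flipY_Rect (p q : Pt) : flipY ⁻¹' Rect p q = Rect (flipY p) (flipY q) := by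
  ext z
  simp only [Rect, flipY, Set.mem_preimage, Set.mem_ofPred_eq, min_neg_neg, max_neg_neg]
  constructor <;> rintro ⟨h₁, h₂, h₃, h₄⟩ <;> exact ⟨h₁, h₂, by linarith, by linarith⟩

theorem preimage_flipY_RectInt (p q : Pt) :
    flipY ⁻¹' RectInt p q = RectInt (flipY p) (flipY q) := by
  ext z
  simp only [RectInt, flipY, Set.mem_preimage, Set.mem_ofPred_eq, min_neg_neg, max_neg_neg]
  constructor <;> rintro ⟨h₁, h₂, h₃, h₄⟩ <;> exact ⟨h₁, h₂, by linarith, by linarith⟩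

theorem preimage_flipY_Corners (p q : Pt) :
    flipY ⁻¹' Corners p q = Corners (flipY p) (flipY q) := by
  ext z
  simp only [Corners, flipY, Set.mem_preimage, Set.mem_insert_iff, Set.mem_singleton_iff,
    Prod.ext_iff, neg_eq_iff_eq_neg]

theorem NonConflicting.flipDem {d e : Dem} (h : NonConflicting d e) :
    NonConflicting (flipDem d) (flipDem e) := by
  have key : ∀ d e : Dem, (∀ c ∈ Corners e.1 e.2, c ∉ RectInt d.1 d.2) →
      ∀ c ∈ Corners (flipY e.1) (flipY e.2), c ∉ RectInt (flipY d.1) (flipY d.2) := by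
    intro d e h c hc hcd
    rw [← preimage_flipY_Corners] at hc
    rw [← preimage_flipY_RectInt] at hcd
    exact h _ hc hcd
  exact ⟨key d e h.1, key e d h.2⟩

theorem VertSeparable.of_image_flipDem {F : Finset Dem} (h : VertSeparable (F.image flipDem)) :
    VertSeparable F := by
  obtain ⟨e, a, hinj, he, ha, hsep⟩ := h
  have hcard : F.card = (F.image flipDem).card :=
    (Finset.card_image_of_injective F flipDem_injective).symm
  refine ⟨flipDem ∘ e ∘ Fin.cast hcard, a ∘ Fin.cast hcard,
    flipDem_injective.comp (hinj.comp (Fin.cast_injective hcard)), fun i => ?_,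
    fun i => ha _, fun i j hij => ?_⟩
  · obtain ⟨d, hd, hde⟩ := Finset.mem_image.mp (he (Fin.cast hcard i))
    simpa [← hde, flipDem_flipDem] using hd
  · show VSeg (a _) (-(e _).1.2) (-(e _).2.2) ∩ Rect (flipY (e _).1) (flipY (e _).2) = ∅
    rw [← preimage_flipY_VSeg, ← preimage_flipY_Rect, ← Set.preimage_inter,
      hsep _ _ ((Fin.cast_lt_cast hcard).mpr hij), Set.preimage_empty]

theorem DistinctX.image_flipY {P : Finset Pt} (hX : DistinctX P) : DistinctX (P.image flipY) := by
  simp only [DistinctX, Finset.mem_image]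
  rintro _ ⟨p, hp, rfl⟩ _ ⟨q, hq, rfl⟩ hne
  exact hX p hp q hq fun h => hne (h ▸ rfl)

theorem DistinctY.image_flipY {P : Finset Pt} (hY : DistinctY P) : DistinctY (P.image flipY) := by
  simp only [DistinctY, Finset.mem_image]
  rintro _ ⟨p, hp, rfl⟩ _ ⟨q, hq, rfl⟩ hne
  exact fun h => hY p hp q hq (fun h' => hne (h' ▸ rfl)) (neg_inj.mp h)

theorem vertSeparable_of_descending {PS : Finset Pt} (hX : DistinctX PS) (hY : DistinctY PS)
    {F : Finset Dem} (hPS : ∀ d ∈ F, d.1 ∈ PS ∧ d.2 ∈ PS)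
    (hdesc : ∀ d ∈ F, d.1.1 < d.2.1 ∧ d.2.2 < d.1.2)
    (hnc : ∀ d ∈ F, ∀ e ∈ F, d ≠ e → NonConflicting d e) : VertSeparable F := by
  refine VertSeparable.of_image_flipDem
    (AscendingFamily.vertSeparable ⟨hX.image_flipY, hY.image_flipY, ?_, ?_, ?_⟩) <;>
  simp only [Finset.forall_mem_image]
  · exact fun d hd => ⟨Finset.mem_image_of_mem _ (hPS d hd).1,
      Finset.mem_image_of_mem _ (hPS d hd).2⟩
  · exact fun d hd => ⟨(hdesc d hd).1, neg_lt_neg (hdesc d hd).2⟩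
  · exact fun d hd e he hde => (hnc d hd e he (ne_of_apply_ne _ hde)).flipDem

theorem card_le_VSN {D D' : Finset Dem} (hD' : D' ⊆ D) (h : VertSeparable D') :
    D'.card ≤ VSN ↑D :=
  le_csSup ⟨D.card, by
    rintro _ ⟨D'', hD'', rfl, -⟩
    exact Finset.card_le_card (by exact_mod_cast hD'')⟩ ⟨D', by exact_mod_cast hD', rfl, h⟩

theorem IRN_le_two_mul_VSN {P : Finset Pt} {D : Finset Dem} (hinst : IsInstance P D)
    (hX : DistinctX P) (hY : DistinctY P) : IRN ↑D ≤ 2 * VSN ↑D := by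
  classical
  refine csSup_le' ?_
  rintro _ ⟨I, hID, rfl, hI⟩
  have hID : I ⊆ D := by exact_mod_cast hID
  have hPS : ∀ d ∈ I, d.1 ∈ P ∧ d.2 ∈ P := fun d hd =>
    ⟨(hinst d (hID hd)).1, (hinst d (hID hd)).2.1⟩
  set Iasc := I.filter fun d => d.1.2 < d.2.2
  set Idesc := I.filter fun d => ¬ d.1.2 < d.2.2
  have hasc : Iasc.card ≤ VSN ↑D :=
    card_le_VSN ((I.filter_subset _).trans hID) (AscendingFamily.vertSeparable
      ⟨hX, hY, fun d hd => hPS d (Finset.mem_of_mem_filter d hd),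
        fun d hd => ⟨(hinst d (hID (Finset.mem_of_mem_filter d hd))).2.2,
          (Finset.mem_filter.mp hd).2⟩,
        fun d hd e he => hI d (Finset.mem_of_mem_filter d hd) e (Finset.mem_of_mem_filter e he)⟩)
  have hdesc : Idesc.card ≤ VSN ↑D := by
    refine card_le_VSN ((I.filter_subset _).trans hID) <| vertSeparable_of_descending hX hY
      (fun d hd => hPS d (Finset.mem_of_mem_filter d hd)) (fun d hd => ?_)
      fun d hd e he => hI d (Finset.mem_of_mem_filter d hd) e (Finset.mem_of_mem_filter e he)
    obtain ⟨hd, hnot⟩ := Finset.mem_filter.mp hd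
    obtain ⟨hp, hq, hx⟩ := hinst d (hID hd)
    exact ⟨hx, lt_of_le_of_ne (not_lt.mp hnot) (hY.snd_ne_of_fst_ne hq hp hx.ne')⟩
  calc I.card = Iasc.card + Idesc.card := (Finset.card_filter_add_card_filter_not _).symm
    _ ≤ 2 * VSN ↑D := by omega

/-- For any MinGMConn instance with pairwise distinct x- and y-coordinates,
`(1/2)·IR(P,D) ≤ VS(P,D)` and `VS(P,D) ≤ 2·opt(P,D)`. -/
theorem stmt1 (P : Finset Pt) (D : Finset Dem)
    (hinst : IsInstance P D) (hX : DistinctX P) (hY : DistinctY P) :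
    IRN ↑D ≤ 2 * VSN ↑D ∧ VSN ↑D ≤ 2 * optN ↑P ↑D :=
  ⟨IRN_le_two_mul_VSN hinst hX hY, (VSN_le_optN hinst hY).trans (Nat.le_mul_of_pos_left _ two_pos)⟩
end

section
/- Let (P,D) be a MinGMConn instance in which all input points have pairwise distinct x-coordinates and pairwise distinct y-coordinates, suppose D is monotone (y(p) < y(q) for every demand (p,q)) and D itself is vertically separable, and let Q be a feasible solution with Q ∩ P = ∅ and |Q| = |D|. Then there exists a bijection c : Q → D such that q ∈ R(c(q)) for every q ∈ Q; in particular, for every subset Q' ⊆ Q there are at least |Q'| distinct demands of D whose demand rectangles each contain some point of Q'. -/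
/-!
Move the separating line `ℓᵢ` of each demand `dᵢ` off the `x`-coordinates of `P ∪ Q`; the
shortest rectilinear path of `dᵢ` then crosses it along a horizontal edge `uᵢvᵢ` inside
`R(dᵢ)`. Map each crossing to the last endpoint, at its height, to the left of its line: if
crossings `i < j` at the same height had the same image, `ℓᵢ` would cross `[uⱼ, vⱼ] ⊆ R(dⱼ)`.
So at each height there are fewer crossings than endpoints, at most one endpoint lies in `P`,
and the others are points of `Q` in the rectangles. This is Hall's condition for matching the
demands into `Q` within their rectangles, and `|Q| = |D|` makes the matching a bijection.
-/

open Finset Function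

structure HorizontalCrossing (S : Set Pt) (d : Dem) (a : ℝ) (u v : Pt) : Prop where
  left_mem : u ∈ S
  right_mem : v ∈ S
  left_mem_rect : u ∈ Rect d.1 d.2
  right_mem_rect : v ∈ Rect d.1 d.2
  snd_eq : u.2 = v.2
  left_lt : u.1 < a
  lt_right : a < v.1

theorem mem_rect_iff {p q z : Pt} :
    z ∈ Rect p q ↔ z.1 ∈ Set.uIcc p.1 q.1 ∧ z.2 ∈ Set.uIcc p.2 q.2 :=
  and_assoc.symm

noncomputable instance (p q : Pt) : DecidablePred (· ∈ Rect p q) := fun _ =>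
  inferInstanceAs (Decidable (_ ∧ _ ∧ _ ∧ _))

theorem mem_vSeg_iff {a y₁ y₂ : ℝ} {z : Pt} :
    z ∈ VSeg a y₁ y₂ ↔ z.1 = a ∧ z.2 ∈ Set.uIcc y₁ y₂ :=
  Iff.rfl

theorem dist1_eq (p q : Pt) : dist1 p q = dist p.1 q.1 + dist p.2 q.2 := by
  simp only [dist1, Real.dist_eq]

theorem dist_add_dist_le_of_sum_dist_le {α : Type*} [PseudoMetricSpace α] {x : ℕ → α} {k t : ℕ}
    (h : ∑ i ∈ range k, dist (x i) (x (i + 1)) ≤ dist (x 0) (x k)) (ht : t ≤ k) :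
    dist (x 0) (x t) + dist (x t) (x k) ≤ dist (x 0) (x k) :=
  calc dist (x 0) (x t) + dist (x t) (x k)
      ≤ ∑ i ∈ range t, dist (x i) (x (i + 1)) + ∑ i ∈ Ico t k, dist (x i) (x (i + 1)) :=
        add_le_add (dist_le_range_sum_dist x t) (dist_le_Ico_sum_dist x ht)
    _ = ∑ i ∈ range k, dist (x i) (x (i + 1)) := sum_range_add_sum_Ico _ ht
    _ ≤ dist (x 0) (x k) := h

theorem mem_uIcc_of_dist_add_dist_le {a b c : ℝ} (h : dist a b + dist b c ≤ dist a c) :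
    b ∈ Set.uIcc a c := by
  rw [← segment_eq_uIcc, mem_segment_iff_wbtw, ← dist_add_dist_eq_iff]
  exact le_antisymm h (dist_triangle a b c)

/-- The `x`- and `y`-lengths of the path are each at least the corresponding displacement,
so both are tight. -/
theorem mem_rect_of_sum_dist1_le {g : ℕ → Pt} {k t : ℕ}
    (h : ∑ i ∈ range k, dist1 (g i) (g (i + 1)) ≤ dist1 (g 0) (g k)) (ht : t ≤ k) :
    g t ∈ Rect (g 0) (g k) := by
  simp only [dist1_eq, sum_add_distrib] at h
  have hx := dist_le_range_sum_dist (fun n => (g n).1) k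
  have hy := dist_le_range_sum_dist (fun n => (g n).2) k
  exact mem_rect_iff.2
    ⟨mem_uIcc_of_dist_add_dist_le (dist_add_dist_le_of_sum_dist_le (x := fun n => (g n).1)
      (by linarith) ht),
     mem_uIcc_of_dist_add_dist_le (dist_add_dist_le_of_sum_dist_le (x := fun n => (g n).2)
      (by linarith) ht)⟩

theorem Nat.exists_lt_not_iff_succ_of_not_iff {p : ℕ → Prop} {k : ℕ} (h : ¬(p 0 ↔ p k)) :
    ∃ i < k, ¬(p i ↔ p (i + 1)) := by
  induction k with
  | zero => exact absurd Iff.rfl h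
  | succ k ih =>
    by_cases hk : p 0 ↔ p k
    · exact ⟨k, k.lt_succ_self, fun h' => h (hk.trans h')⟩
    · obtain ⟨i, hi, h'⟩ := ih hk
      exact ⟨i, by omega, h'⟩

open Fin.NatCast in
theorem MConnected.exists_seq {S : Set Pt} {p q : Pt} (h : MConnected S p q) :
    ∃ (k : ℕ) (g : ℕ → Pt), g 0 = p ∧ g k = q ∧ (∀ n, g n ∈ S) ∧
      (∀ i < k, Aligned (g i) (g (i + 1))) ∧
      ∑ i ∈ range k, dist1 (g i) (g (i + 1)) = dist1 p q := by
  obtain ⟨k, f, h0, hk, hS, hal, hsum⟩ := h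
  set g : ℕ → Pt := fun n => f (n : Fin (k + 1))
  have hcast : ∀ i : Fin k, g i = f i.castSucc ∧ g (i + 1) = f i.succ := fun i =>
    ⟨congrArg f Fin.coe_eq_castSucc, congrArg f (Fin.ext (by simp))⟩
  refine ⟨k, g, by simpa [g] using h0, by simpa [g, Fin.natCast_eq_last] using hk,
    fun n => hS _, fun i hi => ?_, ?_⟩
  · simpa only [hcast ⟨i, hi⟩] using hal ⟨i, hi⟩
  · rw [← hsum, ← Fin.sum_univ_eq_sum_range (fun i => dist1 (g i) (g (i + 1)))]
    exact sum_congr rfl fun i _ => by rw [(hcast i).1, (hcast i).2]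

theorem MConnected.exists_horizontalCrossing {S : Set Pt} {p q : Pt} (h : MConnected S p q)
    {a : ℝ} (ha : min p.1 q.1 < a ∧ a < max p.1 q.1) (hS : ∀ z ∈ S, z.1 ≠ a) :
    ∃ u v, HorizontalCrossing S (p, q) a u v := by
  obtain ⟨k, g, rfl, rfl, hgS, hal, hsum⟩ := h.exists_seq
  have hrect : ∀ n ≤ k, g n ∈ Rect (g 0) (g k) := fun n hn => mem_rect_of_sum_dist1_le hsum.le hn
  have hne : ∀ n, (g n).1 ≠ a := fun n => hS _ (hgS n)
  have hsides : ¬((g 0).1 < a ↔ (g k).1 < a) := by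
    rcases le_total (g 0).1 (g k).1 with hle | hle
    · rw [min_eq_left hle, max_eq_right hle] at ha
      exact fun h => (h.1 ha.1).not_gt ha.2
    · rw [min_eq_right hle, max_eq_left hle] at ha
      exact fun h => (h.2 ha.1).not_gt ha.2
  obtain ⟨i, hik, hi⟩ := Nat.exists_lt_not_iff_succ_of_not_iff (p := fun n => (g n).1 < a) hsides
  have hy : (g i).2 = (g (i + 1)).2 := (hal i hik).resolve_left fun hx => hi (by rw [hx])
  rcases (hne i).lt_or_gt with hlt | hgt
  · have hgt : a < (g (i + 1)).1 :=
      (hne _).symm.lt_of_le (not_lt.1 fun h => hi (iff_of_true hlt h))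
    exact ⟨g i, g (i + 1), hgS _, hgS _, hrect _ hik.le, hrect _ hik, hy, hlt, hgt⟩
  · have hlt : (g (i + 1)).1 < a := by
      by_contra h
      exact hi (iff_of_false hgt.not_gt h)
    exact ⟨g (i + 1), g i, hgS _, hgS _, hrect _ hik, hrect _ hik.le, hy.symm, hlt, hgt⟩

theorem isOpen_setOf_vSeg_inter_rect_eq_empty (y₁ y₂ : ℝ) (p q : Pt) :
    IsOpen {a | VSeg a y₁ y₂ ∩ Rect p q = ∅} := by
  have hprod : ∀ a, VSeg a y₁ y₂ ∩ Rect p q =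
      ({a} ∩ Set.uIcc p.1 q.1) ×ˢ (Set.uIcc y₁ y₂ ∩ Set.uIcc p.2 q.2) := by
    intro a
    ext z
    simp only [Set.mem_inter_iff, mem_vSeg_iff, mem_rect_iff, Set.mem_prod,
      Set.mem_singleton_iff]
    tauto
  simp only [hprod, Set.prod_eq_empty_iff, Set.singleton_inter_eq_empty]
  exact isClosed_Icc.isOpen_compl.union isOpen_const

/-- Avoiding the later rectangles is an open condition on the position of a line, so each
line can be moved off the finitely many `x`-coordinates of `P ∪ Q`. -/
theorem VertSeparable.exists_crossings {P Q : Finset Pt} {D : Finset Dem}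
    (hvs : VertSeparable D) (hfeas : MFeasible ↑P ↑D ↑Q) :
    ∃ (e : Fin D.card → Dem) (a : Fin D.card → ℝ) (u v : Fin D.card → Pt),
      Injective e ∧ (∀ i, e i ∈ D) ∧
      (∀ i, HorizontalCrossing (↑P ∪ ↑Q) (e i) (a i) (u i) (v i)) ∧
      ∀ i j, i < j → (a i, (u i).2) ∉ Rect (e j).1 (e j).2 := by
  obtain ⟨e, a, he, heD, ha, hsep⟩ := hvs
  have hmove : ∀ i, ∃ a', (min (e i).1.1 (e i).2.1 < a' ∧ a' < max (e i).1.1 (e i).2.1) ∧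
      (∀ j, i < j → VSeg a' (e i).1.2 (e i).2.2 ∩ Rect (e j).1 (e j).2 = ∅) ∧
      a' ∉ (P ∪ Q).image Prod.fst := by
    intro i
    have hev : ∀ᶠ a' in nhds (a i),
        (min (e i).1.1 (e i).2.1 < a' ∧ a' < max (e i).1.1 (e i).2.1) ∧
          ∀ j, i < j → VSeg a' (e i).1.2 (e i).2.2 ∩ Rect (e j).1 (e j).2 = ∅ := by
      refine Filter.Eventually.and (Ioo_mem_nhds (ha i).1 (ha i).2)
        (Filter.eventually_all.2 fun j => ?_)
      by_cases hij : i < j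
      · exact ((isOpen_setOf_vSeg_inter_rect_eq_empty _ _ _ _).eventually_mem
          (hsep i j hij)).mono fun _ h _ => h
      · exact Filter.Eventually.of_forall fun _ h => absurd h hij
    obtain ⟨a', ha', hB⟩ := (infinite_of_mem_nhds (a i) hev).exists_notMem_finset
      ((P ∪ Q).image Prod.fst)
    exact ⟨a', ha'.1, ha'.2, hB⟩
  choose a' ha' hsep' hB using hmove
  have hcross : ∀ i, ∃ u v, HorizontalCrossing (↑P ∪ ↑Q) (e i) (a' i) u v := fun i =>
    (hfeas _ (heD i)).exists_horizontalCrossing (ha' i) fun z hz hza =>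
      hB i (mem_image.2 ⟨z, by simpa using hz, hza⟩)
  choose u v huv using hcross
  refine ⟨e, a', u, v, he, heD, huv, fun i j hij hmem => ?_⟩
  have hseg : (a' i, (u i).2) ∈ VSeg (a' i) (e i).1.2 (e i).2.2 :=
    mem_vSeg_iff.2 ⟨rfl, (mem_rect_iff.1 (huv i).left_mem_rect).2⟩
  exact (Set.eq_empty_iff_forall_notMem.1 (hsep' i j hij)) _ ⟨hseg, hmem⟩

theorem DistinctY.card_filter_snd_eq_le_one {P : Finset Pt} (hY : DistinctY P) (y : ℝ) :
    #{p ∈ P | p.2 = y} ≤ 1 := by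
  refine card_le_one.2 fun p hp q hq => ?_
  rw [mem_filter] at hp hq
  by_contra hne
  exact hY p hp.1 q hq.1 hne (hp.2.trans hq.2.symm)

theorem card_le_card_of_forall_card_fiber_le {ι α κ : Type*} [DecidableEq κ] {s : Finset ι}
    {t : Finset α} (f : ι → κ) (g : α → κ)
    (h : ∀ y, #{i ∈ s | f i = y} ≤ #{z ∈ t | g z = y}) : #s ≤ #t :=
  calc #s = ∑ y ∈ s.image f, #{i ∈ s | f i = y} := card_eq_sum_card_image f s
    _ ≤ ∑ y ∈ s.image f, #{z ∈ t | g z = y} := sum_le_sum fun y _ => h y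
    _ = #{z ∈ t | g z ∈ s.image f} := sum_card_fiberwise_eq_card_filter _ _ _
    _ ≤ #t := card_filter_le _ _

section Counting

variable {ι : Type*} [LinearOrder ι]

/-- Sending each interval to the last endpoint left of its marked point is injective and
misses the largest endpoint. -/
theorem card_lt_card_endpoints {J : Finset ι} (hJ : J.Nonempty) {a u v : ι → ℝ}
    (hu : ∀ i ∈ J, u i < a i) (hv : ∀ i ∈ J, a i < v i)
    (hsep : ∀ i ∈ J, ∀ j ∈ J, i < j → a i ∉ Set.Icc (u j) (v j)) :
    #J < #(J.image u ∪ J.image v) := by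
  set V := J.image u ∪ J.image v
  have huV : ∀ i ∈ J, u i ∈ V := fun i hi => mem_union_left _ (mem_image_of_mem u hi)
  have hvV : ∀ i ∈ J, v i ∈ V := fun i hi => mem_union_right _ (mem_image_of_mem v hi)
  have hV : V.Nonempty := hJ.image u |>.mono subset_union_left
  have hlast : ∀ i, ∃ t, i ∈ J → t ∈ V ∧ t < a i ∧ ∀ s ∈ V, s < a i → s ≤ t := by
    intro i
    by_cases hi : i ∈ J
    · have hne : (V.filter (· < a i)).Nonempty := ⟨u i, mem_filter.2 ⟨huV i hi, hu i hi⟩⟩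
      have hmem := mem_filter.1 (max'_mem _ hne)
      exact ⟨_, fun _ => ⟨hmem.1, hmem.2, fun s hs hsa => le_max' _ s (mem_filter.2 ⟨hs, hsa⟩)⟩⟩
    · exact ⟨0, fun h => absurd h hi⟩
  choose φ hφ using hlast
  have hφ_ne : ∀ i ∈ J, ∀ j ∈ J, i < j → φ i ≠ φ j := by
    intro i hi j hj hij heq
    obtain ⟨-, hφi, -⟩ := hφ i hi
    obtain ⟨-, hφj, hmaxj⟩ := hφ j hj
    refine hsep i hi j hj hij ⟨(hmaxj _ (huV j hj) (hu j hj)).trans heq.ge |>.trans hφi.le, ?_⟩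
    by_contra hlt
    have := (hφ i hi).2.2 _ (hvV j hj) (lt_of_not_ge hlt)
    linarith [hv j hj]
  calc #J ≤ #(V.erase (V.max' hV)) := by
        refine card_le_card_of_injOn φ (fun i hi => mem_erase.2 ⟨?_, (hφ i hi).1⟩) ?_
        · exact ((hφ i hi).2.1.trans ((hv i hi).trans_le (le_max' _ _ (hvV i hi)))).ne
        · intro i hi j hj heq
          rcases lt_trichotomy i j with hij | rfl | hji
          · exact absurd heq (hφ_ne i hi j hj hij)
          · rfl
          · exact absurd heq.symm (hφ_ne j hj i hi hji)
    _ < #V := card_erase_lt_of_mem (max'_mem _ _)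

variable {P Q : Finset Pt} {d : ι → Dem} {a : ι → ℝ} {u v : ι → Pt}

theorem card_filter_snd_eq_le_of_crossings (hY : DistinctY P)
    (hcross : ∀ i, HorizontalCrossing (↑P ∪ ↑Q) (d i) (a i) (u i) (v i))
    (hsep : ∀ i j, i < j → (a i, (u i).2) ∉ Rect (d j).1 (d j).2) (I : Finset ι) (y : ℝ) :
    #{i ∈ I | (u i).2 = y} ≤
      #{z ∈ I.biUnion (fun i => {z ∈ Q | z ∈ Rect (d i).1 (d i).2}) | z.2 = y} := by
  set J := {i ∈ I | (u i).2 = y}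
  set T := {z ∈ I.biUnion (fun i => {z ∈ Q | z ∈ Rect (d i).1 (d i).2}) | z.2 = y}
  rcases J.eq_empty_or_nonempty with hJ | hJ
  · simp [hJ]
  have hJ_sep : ∀ i ∈ J, ∀ j ∈ J, i < j → a i ∉ Set.Icc (u j).1 (v j).1 := by
    intro i hi j hj hij ha
    have hyi := (mem_filter.1 hi).2
    have hyj := (mem_filter.1 hj).2
    have hu := mem_rect_iff.1 (hcross j).left_mem_rect
    have hv := mem_rect_iff.1 (hcross j).right_mem_rect
    exact hsep i j hij (mem_rect_iff.2
      ⟨Set.ordConnected_uIcc.out hu.1 hv.1 ha, hyi.trans hyj.symm ▸ hu.2⟩)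
  have hcount := card_lt_card_endpoints hJ (fun i _ => (hcross i).left_lt)
    (fun i _ => (hcross i).lt_right) hJ_sep
  have hend : ∀ i ∈ J, ∀ w ∈ (↑P ∪ ↑Q : Set Pt), w ∈ Rect (d i).1 (d i).2 → w.2 = y →
      w.1 ∈ T.image Prod.fst ∪ {p ∈ P | p.2 = y}.image Prod.fst := by
    intro i hi w hw hwR hwy
    rcases hw with hwP | hwQ
    · exact mem_union_right _ (mem_image_of_mem _ (mem_filter.2 ⟨hwP, hwy⟩))
    · refine mem_union_left _ (mem_image_of_mem _ (mem_filter.2 ⟨?_, hwy⟩))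
      exact mem_biUnion.2 ⟨i, (mem_filter.1 hi).1, mem_filter.2 ⟨hwQ, hwR⟩⟩
  have hsub : J.image (fun i => (u i).1) ∪ J.image (fun i => (v i).1) ⊆
      T.image Prod.fst ∪ {p ∈ P | p.2 = y}.image Prod.fst := by
    intro x hx
    rcases mem_union.1 hx with hx | hx <;> obtain ⟨i, hi, rfl⟩ := mem_image.1 hx
    · exact hend i hi _ (hcross i).left_mem (hcross i).left_mem_rect (mem_filter.1 hi).2
    · exact hend i hi _ (hcross i).right_mem (hcross i).right_mem_rect
        ((hcross i).snd_eq ▸ (mem_filter.1 hi).2)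
  have hV := (card_le_card hsub).trans (card_union_le _ _)
  have hT := card_image_le (s := T) (f := Prod.fst)
  have hP := (card_image_le (s := {p ∈ P | p.2 = y}) (f := Prod.fst)).trans
    (hY.card_filter_snd_eq_le_one y)
  omega

theorem card_le_card_biUnion_of_crossings (hY : DistinctY P)
    (hcross : ∀ i, HorizontalCrossing (↑P ∪ ↑Q) (d i) (a i) (u i) (v i))
    (hsep : ∀ i j, i < j → (a i, (u i).2) ∉ Rect (d j).1 (d j).2) (I : Finset ι) :
    #I ≤ #(I.biUnion fun i => {z ∈ Q | z ∈ Rect (d i).1 (d i).2}) :=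
  card_le_card_of_forall_card_fiber_le (fun i => (u i).2) Prod.snd
    (card_filter_snd_eq_le_of_crossings hY hcross hsep I)

end Counting

theorem exists_bijective_of_injective_of_card_eq {ι α β : Type*} [Fintype ι] {s : Finset α}
    {t : Finset β} {r : α → β → Prop} {f : ι → α} {g : ι → β} (hf : Injective f)
    (hg : Injective g) (hfs : ∀ i, f i ∈ s) (hgt : ∀ i, g i ∈ t) (hr : ∀ i, r (f i) (g i))
    (hs : #s = Fintype.card ι) (ht : #t = Fintype.card ι) :
    ∃ c : s → t, Bijective c ∧ ∀ x : s, r x (c x) := by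
  set F : ι → s := fun i => ⟨f i, hfs i⟩
  set G : ι → t := fun i => ⟨g i, hgt i⟩
  have hF : Bijective F := (Fintype.bijective_iff_injective_and_card F).2
    ⟨fun i j h => hf (congrArg Subtype.val h), by simp [hs]⟩
  have hG : Bijective G := (Fintype.bijective_iff_injective_and_card G).2
    ⟨fun i j h => hg (congrArg Subtype.val h), by simp [ht]⟩
  set E := Equiv.ofBijective F hF
  refine ⟨G ∘ E.symm, hG.comp E.symm.bijective, fun x => ?_⟩
  obtain ⟨i, rfl⟩ := E.surjective x
  simpa [Function.comp, E] using hr i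

theorem exists_subset_card_le_forall_exists_of_injective {α β : Type*} {s : Finset α}
    {t : Finset β} {r : α → β → Prop} {c : s → t} (hc : Injective c) (hr : ∀ x : s, r x (c x))
    (s' : Finset α) (hs' : s' ⊆ s) :
    ∃ t' ⊆ t, #s' ≤ #t' ∧ ∀ b ∈ t', ∃ a ∈ s', r a b := by
  classical
  set g : s' → β := fun x => c ⟨x, hs' x.2⟩
  have hg : Injective g := fun x y h =>
    Subtype.ext (congrArg Subtype.val (hc (Subtype.ext h)) :)
  refine ⟨s'.attach.image g, fun b hb => ?_, ?_, fun b hb => ?_⟩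
  · obtain ⟨x, -, rfl⟩ := mem_image.1 hb
    exact (c _).2
  · rw [card_image_of_injective _ hg, card_attach]
  · obtain ⟨x, -, rfl⟩ := mem_image.1 hb
    exact ⟨x, x.2, hr ⟨x, hs' x.2⟩⟩

theorem stmt2_general (P : Finset Pt) (D : Finset Dem)
    (hY : DistinctY P)
    (hvs : VertSeparable D)
    (Q : Finset Pt) (hfeas : MFeasible ↑P ↑D ↑Q)
    (hcard : Q.card = D.card) :
    (∃ c : {q : Pt // q ∈ Q} → {d : Dem // d ∈ D}, Function.Bijective c ∧
      ∀ q : {q : Pt // q ∈ Q}, (q : Pt) ∈ Rect (c q : Dem).1 (c q : Dem).2) ∧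
    ∀ Q' ⊆ Q, ∃ D' ⊆ D, Q'.card ≤ D'.card ∧
      ∀ d ∈ D', ∃ q ∈ Q', q ∈ Rect d.1 d.2 := by
  obtain ⟨e, a, u, v, he, heD, hcross, hsep⟩ := hvs.exists_crossings hfeas
  obtain ⟨f, hf, hfQ⟩ := (all_card_le_biUnion_card_iff_exists_injective
    fun i => {z ∈ Q | z ∈ Rect (e i).1 (e i).2}).1
    (card_le_card_biUnion_of_crossings hY hcross hsep)
  obtain ⟨c, hc, hcR⟩ := exists_bijective_of_injective_of_card_eq
    (r := fun q d => q ∈ Rect d.1 d.2) hf he (fun i => (mem_filter.1 (hfQ i)).1) heD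
    (fun i => (mem_filter.1 (hfQ i)).2) (by simp [hcard]) (by simp)
  exact ⟨⟨c, hc, hcR⟩, exists_subset_card_le_forall_exists_of_injective hc.1 hcR⟩

/-- For a monotone, vertically separable demand set `D` and a feasible solution
`Q` disjoint from `P` with `|Q| = |D|`, there is a bijection `c : Q → D` with `q ∈ R(c q)`;
in particular, every `Q' ⊆ Q` is covered by at least `|Q'|` distinct demands. -/
theorem stmt2 (P : Finset Pt) (D : Finset Dem)
    (hinst : IsInstance P D) (hX : DistinctX P) (hY : DistinctY P)
    (hmono : ∀ d ∈ D, d.1.2 < d.2.2)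
    (hvs : VertSeparable D)
    (Q : Finset Pt) (hfeas : MFeasible ↑P ↑D ↑Q)
    (hdisj : ∀ q ∈ Q, q ∉ P) (hcard : Q.card = D.card) :
    (∃ c : {q : Pt // q ∈ Q} → {d : Dem // d ∈ D}, Function.Bijective c ∧
      ∀ q : {q : Pt // q ∈ Q}, (q : Pt) ∈ Rect (c q : Dem).1 (c q : Dem).2) ∧
    ∀ Q' ⊆ Q, ∃ D' ⊆ D, Q'.card ≤ D'.card ∧
      ∀ d ∈ D', ∃ q ∈ Q', q ∈ Rect d.1 d.2 :=
  stmt2_general P D hY hvs Q hfeas hcard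
end
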